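/- Let 𝒢=(V,E) be a temporal graph, δ∈ℕ, v,w∈V, t∈ℕ, and y∈ℕ. Let E(v,w,t)={(v,w,t',λ)∈E : t'≥t} be nonempty and let a_1,…,a_ℓ be its elements listed in nondecreasing order of arrival time t(a)+λ(a). Then the maximum, over all delay sets D⊆E with |D|≤y, of the minimum over all arcs a∈E(v,w,t) of t(a)+λ(a)+[a∈D]·δ, equals min{ t(a_1)+λ(a_1)+δ , t(a_{y+1})+λ(a_{y+1}) }, where the second term is omitted when ℓ ≤ y. -/

import Mathlib

/-- A time arc of a temporal graph: start vertex, end vertex, time label, traversal time. -/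
structure TimeArc (V : Type) where
  src : V
  dst : V
  time : ℕ
  trav : ℕ
deriving DecidableEq

variable {V : Type}

/-- `P` is a `D`-traversal-delayed temporal walk in the temporal graph with time-arc set `E`
(with delay time `δ`). -/
def IsTDWalk [DecidableEq V] (E D : Finset (TimeArc V)) (δ : ℕ)
    (P : List (TimeArc V)) : Prop :=
  (∀ e ∈ P, e ∈ E) ∧
  P.Chain' (fun e f => f.src = e.dst ∧
    e.time + e.trav + (if e ∈ D then δ else 0) ≤ f.time)

/-- `P` is a `D`-starting-delayed temporal walk in the temporal graph with time-arc set `E`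
(with delay time `δ`). -/
def IsSDWalk [DecidableEq V] (E D : Finset (TimeArc V)) (δ : ℕ)
    (P : List (TimeArc V)) : Prop :=
  (∀ e ∈ P, e ∈ E) ∧
  P.Chain' (fun e f => f.src = e.dst ∧
    e.time + e.trav + (if e ∈ D then δ else 0) ≤ f.time + (if f ∈ D then δ else 0))

/-- The sequence of vertices visited by a walk: the start vertex of its first arc followed by
the end vertices of all its arcs. -/
def visits : List (TimeArc V) → List V
  | [] => []
  | e :: es => e.src :: (e :: es).map TimeArc.dst

/-- The walk `P` follows the route `R`: the visited vertex sequence of `P` equals `R`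
(the empty walk follows every single-vertex route). -/
def Follows (P : List (TimeArc V)) (R : List V) : Prop :=
  match P with
  | [] => ∃ v, R = [v]
  | e :: es => visits (e :: es) = R

/-- `R` is a `D`-traversal-delayed route: some `D`-traversal-delayed temporal walk follows `R`. -/
def IsTDRoute [DecidableEq V] (E D : Finset (TimeArc V)) (δ : ℕ) (R : List V) : Prop :=
  ∃ P : List (TimeArc V), IsTDWalk E D δ P ∧ Follows P R

/-- `R` is a `D`-starting-delayed route: some `D`-starting-delayed temporal walk follows `R`. -/
def IsSDRoute [DecidableEq V] (E D : Finset (TimeArc V)) (δ : ℕ) (R : List V) : Prop :=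
  ∃ P : List (TimeArc V), IsSDWalk E D δ P ∧ Follows P R

/-- `R` is `x`-traversal-delay-robust: it is a `D`-traversal-delayed route for every
`D ⊆ E` with `|D| ≤ x`. -/
def TDRobust [DecidableEq V] (E : Finset (TimeArc V)) (δ x : ℕ) (R : List V) : Prop :=
  ∀ D : Finset (TimeArc V), D ⊆ E → D.card ≤ x → IsTDRoute E D δ R

/-- `R` is `x`-starting-delay-robust: it is a `D`-starting-delayed route for every
`D ⊆ E` with `|D| ≤ x`. -/
def SDRobust [DecidableEq V] (E : Finset (TimeArc V)) (δ x : ℕ) (R : List V) : Prop :=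
  ∀ D : Finset (TimeArc V), D ⊆ E → D.card ≤ x → IsSDRoute E D δ R

/-!
Against `y` delays, some arc among the `y + 1` earliest arrivals stays undelayed, so the minimum
is at most the `(y + 1)`-st arrival time; it is also at most the first arrival plus `δ`. Delaying
exactly the `y` earliest arcs attains this bound: every undelayed arc arrives no earlier than the
`(y + 1)`-st, and every delayed one no earlier than the first plus `δ`.
-/

namespace List

variable {α : Type*} {f : α → ℕ} {L : List α}

theorem Pairwise.apply_head_le (hL : L.Pairwise (fun a b => f a ≤ f b)) {a₁ a : α}
    (ha₁ : L.head? = some a₁) (ha : a ∈ L) : f a₁ ≤ f a := by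
  obtain ⟨L, rfl⟩ := List.head?_eq_some_iff.1 ha₁
  rcases List.mem_cons.1 ha with rfl | ha
  · exact le_rfl
  · exact List.rel_of_pairwise_cons hL ha

theorem Pairwise.apply_getElem_le_of_le (hL : L.Pairwise (fun a b => f a ≤ f b)) {i j : ℕ}
    (hij : i ≤ j) (hj : j < L.length) : f (L[i]'(hij.trans_lt hj)) ≤ f L[j] := by
  rcases hij.lt_or_eq with hij | rfl
  · exact List.pairwise_iff_getElem.1 hL i j _ hj hij
  · exact le_rfl

theorem Pairwise.apply_le_of_mem_take_succ (hL : L.Pairwise (fun a b => f a ≤ f b)) {y : ℕ}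
    (hy : y < L.length) {a : α} (ha : a ∈ L.take (y + 1)) : f a ≤ f L[y] := by
  obtain ⟨i, hi, rfl⟩ := List.mem_take_iff_getElem.1 ha
  exact hL.apply_getElem_le_of_le (by omega) hy

theorem Pairwise.exists_apply_getElem_le_of_notMem_take
    (hL : L.Pairwise (fun a b => f a ≤ f b)) {y : ℕ} {a : α} (ha : a ∈ L)
    (hay : a ∉ L.take y) : ∃ hy : y < L.length, f L[y] ≤ f a := by
  obtain ⟨i, hi, rfl⟩ := List.getElem_of_mem ha
  have hyi : y ≤ i := by
    by_contra! hiy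
    exact hay (List.mem_take_iff_getElem.2 ⟨i, by omega, rfl⟩)
  exact ⟨hyi.trans_lt hi, hL.apply_getElem_le_of_le hyi hi⟩

theorem Nodup.exists_mem_take_succ_notMem [DecidableEq α] (hL : L.Nodup) {D : Finset α}
    {y : ℕ} (hD : D.card ≤ y) (hy : y < L.length) : ∃ a ∈ L.take (y + 1), a ∉ D := by
  have hcard : (L.take (y + 1)).toFinset.card = y + 1 := by
    rw [List.toFinset_card_of_nodup (hL.sublist (List.take_sublist _ _)), List.length_take]
    omega
  obtain ⟨a, ha, haD⟩ := Finset.exists_mem_notMem_of_card_lt_card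
    (s := D) (t := (L.take (y + 1)).toFinset) (by omega)
  exact ⟨a, List.mem_toFinset.1 ha, haD⟩

end List

section DelayedMinimum

variable {α : Type*} [DecidableEq α] (f : α → ℕ) (δ : ℕ) {S : Finset α} (hS : S.Nonempty)
  {L : List α}

theorem inf'_add_ite_le_getElem (hset : L.toFinset = S) (hnd : L.Nodup)
    (hsorted : L.Pairwise (fun a b => f a ≤ f b)) {D : Finset α} {y : ℕ} (hD : D.card ≤ y)
    (hy : y < L.length) : S.inf' hS (fun a => f a + if a ∈ D then δ else 0) ≤ f L[y] := by
  obtain ⟨a, hat, haD⟩ := hnd.exists_mem_take_succ_notMem hD hy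
  have haS : a ∈ S := hset ▸ List.mem_toFinset.2 (List.mem_of_mem_take hat)
  calc S.inf' hS (fun a => f a + if a ∈ D then δ else 0)
      ≤ f a + if a ∈ D then δ else 0 := Finset.inf'_le _ haS
    _ = f a := by rw [if_neg haD, add_zero]
    _ ≤ f L[y] := hsorted.apply_le_of_mem_take_succ hy hat

theorem le_add_ite_mem_toFinset_take (hsorted : L.Pairwise (fun a b => f a ≤ f b)) {a₁ a : α}
    (ha₁ : L.head? = some a₁) (ha : a ∈ L) (y : ℕ) :
    (if h : y < L.length then min (f a₁ + δ) (f L[y]) else f a₁ + δ) ≤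
      f a + if a ∈ (L.take y).toFinset then δ else 0 := by
  by_cases hay : a ∈ L.take y
  · have h₁ : f a₁ + δ ≤ f a + δ := by grw [hsorted.apply_head_le ha₁ ha]
    rw [if_pos (List.mem_toFinset.2 hay)]
    split_ifs
    · exact (min_le_left _ _).trans h₁
    · exact h₁
  · obtain ⟨hy, hya⟩ := hsorted.exists_apply_getElem_le_of_notMem_take ha hay
    rw [dif_pos hy, if_neg (mt List.mem_toFinset.1 hay), add_zero]
    exact (min_le_right _ _).trans hya

end DelayedMinimum

theorem statement7 {V : Type} [DecidableEq V] (E : Finset (TimeArc V)) (δ : ℕ)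
    (v w : V) (t y : ℕ)
    (hne : (E.filter (fun a => a.src = v ∧ a.dst = w ∧ t ≤ a.time)).Nonempty)
    (L : List (TimeArc V)) (hnd : L.Nodup)
    (hset : L.toFinset = E.filter (fun a => a.src = v ∧ a.dst = w ∧ t ≤ a.time))
    (hsorted : L.Pairwise (fun a b => a.time + a.trav ≤ b.time + b.trav))
    (a1 : TimeArc V) (ha1 : L.head? = some a1) :
    (E.powerset.filter (fun D => D.card ≤ y)).sup' ⟨∅, by simp⟩
      (fun D => (E.filter (fun a => a.src = v ∧ a.dst = w ∧ t ≤ a.time)).inf' hne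
        (fun a => a.time + a.trav + if a ∈ D then δ else 0)) =
    if h : y < L.length then
      min (a1.time + a1.trav + δ) ((L.get ⟨y, h⟩).time + (L.get ⟨y, h⟩).trav)
    else a1.time + a1.trav + δ := by
  set S := E.filter (fun a => a.src = v ∧ a.dst = w ∧ t ≤ a.time)
  have hmem : ∀ a, a ∈ L ↔ a ∈ S := fun a => by rw [← hset, List.mem_toFinset]
  have ha1S : a1 ∈ S := (hmem a1).1 (List.mem_of_mem_head? ha1)
  simp only [List.get_eq_getElem]
  apply le_antisymm
  · refine Finset.sup'_le _ _ fun D hD => ?_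
    have hfirst : S.inf' hne (fun a => a.time + a.trav + if a ∈ D then δ else 0) ≤
        a1.time + a1.trav + δ :=
      (Finset.inf'_le _ ha1S).trans (by split_ifs <;> omega)
    split_ifs with hy
    · exact le_min hfirst (inf'_add_ite_le_getElem (fun a => a.time + a.trav) δ hne hset hnd
        hsorted (Finset.mem_filter.1 hD).2 hy)
    · exact hfirst
  · have hD₀ : (L.take y).toFinset ∈ E.powerset.filter (fun D => D.card ≤ y) := by
      refine Finset.mem_filter.2 ⟨Finset.mem_powerset.2 fun a ha => ?_, ?_⟩
      · exact (Finset.mem_filter.1 ((hmem a).1 (List.mem_of_mem_take (List.mem_toFinset.1 ha)))).1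
      · exact (List.toFinset_card_le _).trans (List.length_take_le _ _)
    refine le_trans ?_ (Finset.le_sup' _ hD₀)
    exact Finset.le_inf' _ _ fun a ha => le_add_ite_mem_toFinset_take
      (fun a => a.time + a.trav) δ hsorted ha1 ((hmem a).2 ha) y
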